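/- arXiv:2403.05097 — 4 statements merged into one kernel-verified Lean document; each statement's English description precedes it below -/
import Mathlib

section
/- Let φ : C → D be a triangulated functor between skeletally small triangulated categories which is fully faithful and such that every object of D is a direct summand of φ(Y) for some Y in C. Then the induced map on Grothendieck groups G(φ) : G(C) → G(D) is injective. -/
open CategoryTheory Limits Pretriangulated

/-- The set of Euler relations (together with identifications of isomorphic objects)
in the free abelian group on the objects of a pretriangulated category. -/
def eulerSubgroup (C : Type*) [Category C] [Preadditive C] [HasZeroObject C]
    [HasShift C ℤ] [∀ n : ℤ, (shiftFunctor C n).Additive] [Pretriangulated C] :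
    AddSubgroup (FreeAbelianGroup C) :=
  AddSubgroup.closure
    ({x | ∃ T : Triangle C, (T ∈ distTriang C) ∧
        x = FreeAbelianGroup.of T.obj₂ - FreeAbelianGroup.of T.obj₁ -
              FreeAbelianGroup.of T.obj₃} ∪
     {x | ∃ U V : C, Nonempty (U ≅ V) ∧
        x = FreeAbelianGroup.of U - FreeAbelianGroup.of V})

/-- The Grothendieck group of a (skeletally small) pretriangulated category: the free
abelian group on (isomorphism classes of) objects modulo the Euler relations. -/
abbrev GGroup (C : Type*) [Category C] [Preadditive C] [HasZeroObject C]
    [HasShift C ℤ] [∀ n : ℤ, (shiftFunctor C n).Additive] [Pretriangulated C] :=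
  FreeAbelianGroup C ⧸ eulerSubgroup C

/-- The class of an object in the Grothendieck group. -/
def gclass {C : Type*} [Category C] [Preadditive C] [HasZeroObject C]
    [HasShift C ℤ] [∀ n : ℤ, (shiftFunctor C n).Additive] [Pretriangulated C]
    (X : C) : GGroup C :=
  QuotientAddGroup.mk (FreeAbelianGroup.of X)


/-!
Every element of the Grothendieck group is the class of one object, since
`[X] + [Y] = [X ⊞ Y]` and `-[X] = [X⟦1⟧]`. Following Thomason, `[X] = [Y]` holds iff for some `E`
the objects `X ⊞ E` and `Y ⊞ E` are cones of two morphisms `W₁ ⟶ W₂` with the same source and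
target: objects modulo this relation already form a group in which the Euler relations hold.

If `[φ X] = [φ Y]` in `D`, adding the triangles `W₁' ⟶ W₁' ⟶ 0` and `0 ⟶ W₂' ⟶ W₂'` makes `W₁` and
`W₂` images of `φ`, because every object of `D` is a direct summand of one. By fullness both
morphisms lift to `C`; their cones `Q₁, Q₂` have the same class `[W₂] - [W₁]`, and
`φ (X ⊞ Q₂) ≅ φ (Y ⊞ Q₁)` gives `X ⊞ Q₂ ≅ Y ⊞ Q₁`, hence `[X] = [Y]`.
-/

open ZeroObject

attribute [local instance] preservesBinaryBiproducts_of_preservesBiproducts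

section

variable {A : Type*} [Category A] [Preadditive A] [HasZeroObject A] [HasShift A ℤ]
  [∀ n : ℤ, (shiftFunctor A n).Additive] [Pretriangulated A]

def HasDistTriang (X Y Z : A) : Prop :=
  ∃ (f : X ⟶ Y) (g : Y ⟶ Z) (h : Z ⟶ X⟦(1 : ℤ)⟧), Triangle.mk f g h ∈ distTriang A

namespace HasDistTriang

lemma of_mem {T : Triangle A} (hT : T ∈ distTriang A) : HasDistTriang T.obj₁ T.obj₂ T.obj₃ :=
  ⟨T.mor₁, T.mor₂, T.mor₃, hT⟩

lemma of_iso {X Y Z X' Y' Z' : A} (h : HasDistTriang X Y Z)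
    (e₁ : X ≅ X') (e₂ : Y ≅ Y') (e₃ : Z ≅ Z') : HasDistTriang X' Y' Z' := by
  obtain ⟨f, g, m, hT⟩ := h
  exact ⟨e₁.inv ≫ f ≫ e₂.hom, e₂.inv ≫ g ≫ e₃.hom, e₃.inv ≫ m ≫ e₁.hom⟦(1 : ℤ)⟧',
    isomorphic_distinguished _ hT _ (Triangle.isoMk _ _ e₁.symm e₂.symm e₃.symm
      (by dsimp only [Triangle.mk]; simp) (by dsimp only [Triangle.mk]; simp)
      (by dsimp only [Triangle.mk]; simp [← Functor.map_comp]))⟩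

lemma contractible (X : A) : HasDistTriang X X 0 :=
  of_mem (contractible_distinguished X)

lemma zero_mid (X : A) : HasDistTriang X 0 (X⟦(1 : ℤ)⟧) :=
  of_mem (rot_of_distTriang _ (contractible_distinguished X))

lemma zero_left (X : A) : HasDistTriang 0 X X :=
  of_mem (contractible_distinguished₁ X)

lemma biprod {X Y Z X' Y' Z' : A} (h : HasDistTriang X Y Z) (h' : HasDistTriang X' Y' Z') :
    HasDistTriang (X ⊞ X') (Y ⊞ Y') (Z ⊞ Z') := by
  obtain ⟨f, g, m, hT⟩ := h
  obtain ⟨f', g', m', hT'⟩ := h'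
  let T := pairFunction (Triangle.mk f g m) (Triangle.mk f' g' m')
  have piIso : ∀ F : Triangle A ⥤ A, (∏ᶜ fun j => F.obj (T j)) ≅
      F.obj (Triangle.mk f g m) ⊞ F.obj (Triangle.mk f' g' m') := fun F =>
    HasLimit.isoOfNatIso (Discrete.natIso (fun ⟨j⟩ => by cases j <;> exact Iso.refl _)) ≪≫
      (biprod.isoProd _ _).symm
  exact (of_mem (productTriangle_distinguished T (by rintro (_ | _) <;> assumption))).of_iso
    (piIso Triangle.π₁) (piIso Triangle.π₂) (piIso Triangle.π₃)

lemma shift {X Y Z : A} (h : HasDistTriang X Y Z) :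
    HasDistTriang (X⟦(1 : ℤ)⟧) (Y⟦(1 : ℤ)⟧) (Z⟦(1 : ℤ)⟧) := by
  obtain ⟨f, g, m, hT⟩ := h
  exact of_mem (Triangle.shift_distinguished _ hT 1)

lemma biprod_left {X Y Z : A} (h : HasDistTriang X Y Z) (U : A) :
    HasDistTriang (X ⊞ U) (Y ⊞ U) Z :=
  (h.biprod (contractible U)).of_iso (Iso.refl _) (Iso.refl _)
    (isoBiprodZero (isZero_zero A)).symm

lemma biprod_right {X Y Z : A} (h : HasDistTriang X Y Z) (V : A) :
    HasDistTriang X (Y ⊞ V) (Z ⊞ V) :=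
  (h.biprod (zero_left V)).of_iso (isoBiprodZero (isZero_zero A)).symm (Iso.refl _)
    (Iso.refl _)

lemma gclass_eq {X Y Z : A} (h : HasDistTriang X Y Z) : gclass Y = gclass X + gclass Z := by
  obtain ⟨f, g, m, hT⟩ := h
  change _ = QuotientAddGroup.mk (FreeAbelianGroup.of X + FreeAbelianGroup.of Z)
  rw [gclass, QuotientAddGroup.eq_iff_sub_mem, sub_add_eq_sub_sub]
  exact AddSubgroup.subset_closure (Or.inl ⟨_, hT, rfl⟩)

end HasDistTriang

lemma gclass_of_iso {X Y : A} (e : X ≅ Y) : gclass X = gclass Y := by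
  rw [gclass, gclass, QuotientAddGroup.eq_iff_sub_mem]
  exact AddSubgroup.subset_closure (Or.inr ⟨X, Y, ⟨e⟩, rfl⟩)

lemma gclass_zero : gclass (0 : A) = 0 :=
  left_eq_add.mp (HasDistTriang.contractible (0 : A)).gclass_eq

lemma gclass_biprod (X Y : A) : gclass (X ⊞ Y) = gclass X + gclass Y :=
  (HasDistTriang.of_mem (binaryBiproductTriangle_distinguished X Y)).gclass_eq

lemma gclass_shift (X : A) : gclass (X⟦(1 : ℤ)⟧) = -gclass X := by
  have h := (HasDistTriang.zero_mid X).gclass_eq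
  rw [gclass_zero] at h
  exact (neg_eq_of_add_eq_zero_right h.symm).symm

lemma exists_gclass_eq (x : GGroup A) : ∃ X : A, gclass X = x := by
  obtain ⟨x, rfl⟩ := QuotientAddGroup.mk_surjective x
  induction x using FreeAbelianGroup.induction_on with
  | zero => exact ⟨0, gclass_zero⟩
  | of X => exact ⟨X, rfl⟩
  | neg x ih =>
    obtain ⟨X, hX⟩ := ih
    exact ⟨X⟦(1 : ℤ)⟧, by rw [gclass_shift, hX, QuotientAddGroup.mk_neg]⟩
  | add x y ihx ihy =>
    obtain ⟨X, hX⟩ := ihx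
    obtain ⟨Y, hY⟩ := ihy
    exact ⟨X ⊞ Y, by rw [gclass_biprod, hX, hY, QuotientAddGroup.mk_add]⟩

lemma exists_iso_biprod_of_retraction {X Y : A} (s : X ⟶ Y) (r : Y ⟶ X) (hsr : s ≫ r = 𝟙 X) :
    ∃ Z : A, Nonempty (Y ≅ X ⊞ Z) := by
  obtain ⟨Z, g, m, hT⟩ := distinguished_cocone_triangle s
  have : Mono s := mono_of_mono_fac hsr
  obtain ⟨e, -, -⟩ := exists_iso_binaryBiproduct_of_distTriang _ hT
    (Triangle.mor₃_eq_zero_of_mono₁ _ hT this)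
  exact ⟨Z, ⟨e⟩⟩

def ConeEquiv (X Y : A) : Prop :=
  ∃ E W₁ W₂ : A, HasDistTriang W₁ W₂ (X ⊞ E) ∧ HasDistTriang W₁ W₂ (Y ⊞ E)

namespace ConeEquiv

lemma of_iso {X Y : A} (e : X ≅ Y) : ConeEquiv X Y :=
  ⟨0, 0, X, (HasDistTriang.zero_left X).of_iso (Iso.refl _) (Iso.refl _)
      (isoBiprodZero (isZero_zero A)),
    (HasDistTriang.zero_left X).of_iso (Iso.refl _) (Iso.refl _)
      (e ≪≫ isoBiprodZero (isZero_zero A))⟩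

lemma refl (X : A) : ConeEquiv X X := of_iso (Iso.refl X)

lemma symm {X Y : A} (h : ConeEquiv X Y) : ConeEquiv Y X := by
  obtain ⟨E, W₁, W₂, h₁, h₂⟩ := h
  exact ⟨E, W₁, W₂, h₂, h₁⟩

lemma trans {X Y Z : A} (h : ConeEquiv X Y) (h' : ConeEquiv Y Z) : ConeEquiv X Z := by
  obtain ⟨E, W₁, W₂, h₁, h₂⟩ := h
  obtain ⟨E', V₁, V₂, k₁, k₂⟩ := h'
  have τ : E' ⊞ (Y ⊞ E) ≅ E ⊞ (Y ⊞ E') :=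
    biprod.braiding _ _ ≪≫ biprod.associator Y E E' ≪≫
      biprod.mapIso (Iso.refl Y) (biprod.braiding E E') ≪≫
      (biprod.associator Y E' E).symm ≪≫ biprod.braiding _ _
  exact ⟨E ⊞ (Y ⊞ E'), W₁ ⊞ V₁, W₂ ⊞ V₂,
    (h₁.biprod k₁).of_iso (Iso.refl _) (Iso.refl _) (biprod.associator _ _ _),
    (h₂.biprod k₂).of_iso (Iso.refl _) (Iso.refl _)
      (biprod.braiding _ _ ≪≫ biprod.associator Z E' (Y ⊞ E) ≪≫ biprod.mapIso (Iso.refl Z) τ)⟩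

lemma biprod {X Y X' Y' : A} (h : ConeEquiv X Y) (h' : ConeEquiv X' Y') :
    ConeEquiv (X ⊞ X') (Y ⊞ Y') := by
  obtain ⟨E, W₁, W₂, h₁, h₂⟩ := h
  obtain ⟨E', V₁, V₂, k₁, k₂⟩ := h'
  have interchange : ∀ B C B' C' : A, (B ⊞ C) ⊞ (B' ⊞ C') ≅ (B ⊞ B') ⊞ (C ⊞ C') :=
    fun B C B' C' => biprod.associator _ _ _ ≪≫
      biprod.mapIso (Iso.refl B) ((biprod.associator _ _ _).symm ≪≫
        biprod.mapIso (biprod.braiding C B') (Iso.refl C') ≪≫ biprod.associator _ _ _) ≪≫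
      (biprod.associator _ _ _).symm
  exact ⟨E ⊞ E', W₁ ⊞ V₁, W₂ ⊞ V₂,
    (h₁.biprod k₁).of_iso (Iso.refl _) (Iso.refl _) (interchange _ _ _ _),
    (h₂.biprod k₂).of_iso (Iso.refl _) (Iso.refl _) (interchange _ _ _ _)⟩

lemma shift {X Y : A} (h : ConeEquiv X Y) : ConeEquiv (X⟦(1 : ℤ)⟧) (Y⟦(1 : ℤ)⟧) := by
  obtain ⟨E, W₁, W₂, h₁, h₂⟩ := h
  exact ⟨E⟦(1 : ℤ)⟧, W₁⟦(1 : ℤ)⟧, W₂⟦(1 : ℤ)⟧,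
    h₁.shift.of_iso (Iso.refl _) (Iso.refl _) ((shiftFunctor A (1 : ℤ)).mapBiprod X E),
    h₂.shift.of_iso (Iso.refl _) (Iso.refl _) ((shiftFunctor A (1 : ℤ)).mapBiprod Y E)⟩

lemma shift_biprod_self (X : A) : ConeEquiv (X⟦(1 : ℤ)⟧ ⊞ X) 0 :=
  ⟨0, X, X,
    ((HasDistTriang.zero_mid X).biprod (HasDistTriang.zero_left X)).of_iso
      (isoBiprodZero (isZero_zero A)).symm (isoZeroBiprod (isZero_zero A)).symm
      (isoBiprodZero (isZero_zero A)),
    (HasDistTriang.contractible X).of_iso (Iso.refl _) (Iso.refl _)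
      (isoBiprodZero (isZero_zero A))⟩

lemma of_distTriang {T : Triangle A} (hT : T ∈ distTriang A) :
    ConeEquiv T.obj₂ (T.obj₁ ⊞ T.obj₃) :=
  ⟨0, T.obj₃⟦(-1 : ℤ)⟧, T.obj₁,
    (HasDistTriang.of_mem (inv_rot_of_distTriang _ hT)).of_iso (Iso.refl _) (Iso.refl _)
      (isoBiprodZero (isZero_zero A)),
    ((HasDistTriang.zero_mid _).biprod (HasDistTriang.zero_left T.obj₁)).of_iso
      (isoBiprodZero (isZero_zero A)).symm (isoZeroBiprod (isZero_zero A)).symm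
      (biprod.mapIso (shiftNegShift T.obj₃ 1) (Iso.refl _) ≪≫ biprod.braiding _ _ ≪≫
        isoBiprodZero (isZero_zero A))⟩

variable (A) in
def setoid : Setoid A where
  r := ConeEquiv
  iseqv := ⟨refl, symm, trans⟩

end ConeEquiv

variable (A) in
def ConeGroup : Type _ := Quotient (ConeEquiv.setoid A)

namespace ConeGroup

def mk (X : A) : ConeGroup A := Quotient.mk (ConeEquiv.setoid A) X

noncomputable instance : Zero (ConeGroup A) := ⟨mk 0⟩

noncomputable instance : Add (ConeGroup A) :=
  ⟨Quotient.map₂ (· ⊞ ·) fun _ _ h _ _ h' => h.biprod h'⟩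

noncomputable instance : Neg (ConeGroup A) :=
  ⟨Quotient.map (·⟦(1 : ℤ)⟧) fun _ _ h => h.shift⟩

noncomputable instance : AddCommGroup (ConeGroup A) where
  nsmul := nsmulRec
  zsmul := zsmulRec
  add_assoc := by
    rintro ⟨X⟩ ⟨Y⟩ ⟨Z⟩
    exact Quotient.sound (ConeEquiv.of_iso (biprod.associator X Y Z))
  zero_add := by
    rintro ⟨X⟩
    exact Quotient.sound (ConeEquiv.of_iso (isoZeroBiprod (isZero_zero A)).symm)
  add_zero := by
    rintro ⟨X⟩
    exact Quotient.sound (ConeEquiv.of_iso (isoBiprodZero (isZero_zero A)).symm)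
  add_comm := by
    rintro ⟨X⟩ ⟨Y⟩
    exact Quotient.sound (ConeEquiv.of_iso (biprod.braiding X Y))
  neg_add_cancel := by
    rintro ⟨X⟩
    exact Quotient.sound (ConeEquiv.shift_biprod_self X)

lemma mk_add (X Y : A) : mk X + mk Y = mk (X ⊞ Y) := rfl

variable (A) in
noncomputable def ofGGroup : GGroup A →+ ConeGroup A :=
  QuotientAddGroup.lift (eulerSubgroup A) (FreeAbelianGroup.lift mk) <| by
    rw [eulerSubgroup, AddSubgroup.closure_le]
    rintro x (⟨T, hT, rfl⟩ | ⟨X, Y, ⟨e⟩, rfl⟩) <;>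
      simp only [SetLike.mem_coe, AddMonoidHom.mem_ker, map_sub, FreeAbelianGroup.lift_apply_of]
    · rw [sub_sub, sub_eq_zero, mk_add]
      exact Quotient.sound (ConeEquiv.of_distTriang hT)
    · rw [sub_eq_zero]
      exact Quotient.sound (ConeEquiv.of_iso e)

lemma ofGGroup_gclass (X : A) : ofGGroup A (gclass X) = mk X :=
  FreeAbelianGroup.lift_apply_of _ _

end ConeGroup

lemma coneEquiv_of_gclass_eq {X Y : A} (h : gclass X = gclass Y) : ConeEquiv X Y := by
  have h' := congrArg (ConeGroup.ofGGroup A) h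
  rw [ConeGroup.ofGGroup_gclass, ConeGroup.ofGGroup_gclass] at h'
  exact Quotient.exact h'

end

section Functor

variable {C D : Type*} [Category C] [Category D] [Preadditive D] [HasZeroObject D]
  [HasShift D ℤ] [∀ n : ℤ, (shiftFunctor D n).Additive] [Pretriangulated D] (φ : C ⥤ D)

lemma ConeEquiv.exists_map_of_retraction
    (hdense : ∀ Y : D, ∃ (X : C) (s : Y ⟶ φ.obj X) (r : φ.obj X ⟶ Y), s ≫ r = 𝟙 Y)
    {X Y : D} (h : ConeEquiv X Y) : ∃ (E : D) (P Q : C),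
      HasDistTriang (φ.obj P) (φ.obj Q) (X ⊞ E) ∧ HasDistTriang (φ.obj P) (φ.obj Q) (Y ⊞ E) := by
  have summand (W : D) : ∃ (P : C) (W' : D), Nonempty (φ.obj P ≅ W ⊞ W') := by
    obtain ⟨P, s, r, hsr⟩ := hdense W
    obtain ⟨W', e⟩ := exists_iso_biprod_of_retraction s r hsr
    exact ⟨P, W', e⟩
  obtain ⟨E, W₁, W₂, h₁, h₂⟩ := h
  obtain ⟨P, W₁', ⟨e₁⟩⟩ := summand W₁
  obtain ⟨Q, W₂', ⟨e₂⟩⟩ := summand (W₂ ⊞ W₁')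
  have enlarge (Z : D) (hZ : HasDistTriang W₁ W₂ (Z ⊞ E)) :
      HasDistTriang (φ.obj P) (φ.obj Q) (Z ⊞ (E ⊞ W₂')) :=
    ((hZ.biprod_left W₁').biprod_right W₂').of_iso e₁.symm e₂.symm (biprod.associator _ _ _)
  exact ⟨E ⊞ W₂', P, Q, enlarge X h₁, enlarge Y h₂⟩

variable [Preadditive C] [HasZeroObject C] [HasShift C ℤ]
  [∀ n : ℤ, (shiftFunctor C n).Additive] [Pretriangulated C]

lemma HasDistTriang.exists_map_iso [φ.CommShift ℤ] [φ.IsTriangulated] [φ.Full] {X Y : C}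
    {Z : D} (h : HasDistTriang (φ.obj X) (φ.obj Y) Z) :
    ∃ Q : C, HasDistTriang X Y Q ∧ Nonempty (φ.obj Q ≅ Z) := by
  obtain ⟨f, g, m, hT⟩ := h
  obtain ⟨Q, g', m', hQ⟩ := distinguished_cocone_triangle (φ.preimage f)
  exact ⟨Q, ⟨_, _, _, hQ⟩, ⟨Triangle.π₃.mapIso (isoTriangleOfIso₁₂ _ _
    (φ.map_distinguished _ hQ) hT (Iso.refl _) (Iso.refl _)
    ((Category.comp_id _).trans ((φ.map_preimage f).trans (Category.id_comp f).symm)))⟩⟩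

lemma gclass_eq_of_coneEquiv_map [φ.Additive] [φ.CommShift ℤ] [φ.IsTriangulated] [φ.Full]
    [φ.Faithful]
    (hdense : ∀ Y : D, ∃ (X : C) (s : Y ⟶ φ.obj X) (r : φ.obj X ⟶ Y), s ≫ r = 𝟙 Y)
    {X Y : C} (h : ConeEquiv (φ.obj X) (φ.obj Y)) : gclass X = gclass Y := by
  obtain ⟨E, P, Q, h₁, h₂⟩ := h.exists_map_of_retraction φ hdense
  obtain ⟨Q₁, t₁, ⟨e₁⟩⟩ := h₁.exists_map_iso φ
  obtain ⟨Q₂, t₂, ⟨e₂⟩⟩ := h₂.exists_map_iso φ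
  have hQ : gclass Q₁ = gclass Q₂ := add_left_cancel (t₁.gclass_eq.symm.trans t₂.gclass_eq)
  have swap : φ.obj X ⊞ (φ.obj Y ⊞ E) ≅ φ.obj Y ⊞ (φ.obj X ⊞ E) :=
    (biprod.associator _ _ _).symm ≪≫ biprod.mapIso (biprod.braiding _ _) (Iso.refl E) ≪≫
      biprod.associator _ _ _
  have e : X ⊞ Q₂ ≅ Y ⊞ Q₁ := φ.preimageIso <| φ.mapBiprod _ _ ≪≫
    biprod.mapIso (Iso.refl _) e₂ ≪≫ swap ≪≫ (biprod.mapIso (Iso.refl _) e₁).symm ≪≫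
      (φ.mapBiprod _ _).symm
  have hX := gclass_of_iso e
  rw [gclass_biprod, gclass_biprod, hQ] at hX
  exact add_right_cancel hX

end Functor

/-- If `φ : C ⥤ D` is a triangulated functor which is fully faithful and such that every
object of `D` is (isomorphic to) a direct summand of `φ Y` for some `Y : C`, then the
induced map on Grothendieck groups is injective. -/
theorem grothendieck_map_injective_of_equivalence_upto_summands
    {C D : Type*} [Category C] [Preadditive C] [HasZeroObject C] [HasShift C ℤ]
    [∀ n : ℤ, (shiftFunctor C n).Additive] [Pretriangulated C]
    [Category D] [Preadditive D] [HasZeroObject D] [HasShift D ℤ]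
    [∀ n : ℤ, (shiftFunctor D n).Additive] [Pretriangulated D]
    (φ : C ⥤ D) [φ.Additive] [φ.CommShift ℤ] [φ.IsTriangulated]
    [φ.Full] [φ.Faithful]
    (hdense : ∀ Y : D, ∃ (X : C) (s : Y ⟶ φ.obj X) (r : φ.obj X ⟶ Y), s ≫ r = 𝟙 Y)
    (g : GGroup C →+ GGroup D)
    (hg : ∀ X : C, g (gclass X) = gclass (φ.obj X)) :
    Function.Injective g := by
  intro x y hxy
  obtain ⟨X, rfl⟩ := exists_gclass_eq x
  obtain ⟨Y, rfl⟩ := exists_gclass_eq y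
  rw [hg, hg] at hxy
  exact gclass_eq_of_coneEquiv_map φ hdense (coneEquiv_of_gclass_eq hxy)
end

section
/- Let φ : C → D be a fully faithful triangulated functor such that every object of D is a direct summand of an object in the image of φ, and assume D satisfies weak cancellation (U ⊕ V ≅ U ⊕ W implies V ≅ W). If V ∈ D satisfies [V] ∈ image(G(φ)) in the Grothendieck group G(D), then there exists W ∈ C with φ(W) ≅ V. -/
/-!
This is Thomason's classification of dense triangulated subcategories, applied to the essential
image `P` of `φ`, which is a triangulated subcategory closed under isomorphisms in which every
object of `D` has a complement `M ⊞ M' ∈ P`. Call `M` and `N` equivalent when `M ⊞ W ∈ P ↔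
N ⊞ W ∈ P` for all `W`. Under `⊞` the classes form a commutative monoid in which the class of `M`
vanishes exactly when `M ∈ P`, and complements make it a group. Adding complements of the outer
terms of a distinguished triangle and using closure of `P` under extensions shows that the class
of the middle term is the sum of the outer ones, so `M ↦ [M]` factors through `G(D)`. The classes
of objects of `P` vanish, hence so does the image of `G(φ)`, and `[V]` in that image forces
`V ∈ P`.
-/

open CategoryTheory Limits Pretriangulated

/-- Weak cancellation: `U ⊞ V ≅ U ⊞ W` implies `V ≅ W`. -/
def WeakCancellation (D : Type*) [Category D] [Preadditive D] [HasBinaryBiproducts D] : Prop :=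
  ∀ U V W : D, Nonempty (U ⊞ V ≅ U ⊞ W) → Nonempty (V ≅ W)

open ZeroObject

namespace CategoryTheory

noncomputable def Limits.piFinTwoIsoBiprod {C : Type*} [Category C] [Preadditive C]
    [HasBinaryBiproducts C] (g : Fin 2 → C) [HasProduct g] : ∏ᶜ g ≅ g 0 ⊞ g 1 where
  hom := biprod.lift (Pi.π g 0) (Pi.π g 1)
  inv := Pi.lift fun
    | 0 => biprod.fst
    | 1 => biprod.snd
  hom_inv_id := Pi.hom_ext _ _ fun
    | 0 => by simp
    | 1 => by simp
  inv_hom_id := by apply biprod.hom_ext <;> simp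

noncomputable def Limits.biprod.swapSnd {C : Type*} [Category C] [Preadditive C]
    [HasBinaryBiproducts C] (X Y Z W : C) : (X ⊞ Y) ⊞ (Z ⊞ W) ≅ (X ⊞ W) ⊞ (Z ⊞ Y) where
  hom := biprod.lift (biprod.lift (biprod.fst ≫ biprod.fst) (biprod.snd ≫ biprod.snd))
    (biprod.lift (biprod.snd ≫ biprod.fst) (biprod.fst ≫ biprod.snd))
  inv := biprod.lift (biprod.lift (biprod.fst ≫ biprod.fst) (biprod.snd ≫ biprod.snd))
    (biprod.lift (biprod.snd ≫ biprod.fst) (biprod.fst ≫ biprod.snd))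
  hom_inv_id := by ext <;> simp
  inv_hom_id := by ext <;> simp

variable {A : Type*} [Category A] [Preadditive A] [HasZeroObject A] [HasShift A ℤ]
  [∀ n : ℤ, (shiftFunctor A n).Additive] [Pretriangulated A]

namespace ObjectProperty

variable (P : ObjectProperty A)

def SameComplements (M N : A) : Prop :=
  ∀ W : A, P (M ⊞ W) ↔ P (N ⊞ W)

def sameComplementsSetoid : Setoid A where
  r := P.SameComplements
  iseqv := ⟨fun _ _ => Iff.rfl, fun h W => (h W).symm, fun h h' W => (h W).trans (h' W)⟩

def ComplementClasses : Type _ := _root_.Quotient P.sameComplementsSetoid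

def ComplementClasses.mk (M : A) : P.ComplementClasses := _root_.Quotient.mk _ M

variable {P} in
lemma ComplementClasses.mk_eq_mk {M N : A} (h : P.SameComplements M N) :
    ComplementClasses.mk P M = ComplementClasses.mk P N :=
  _root_.Quotient.sound h

variable [P.IsClosedUnderIsomorphisms]

lemma exists_prop_biprod_of_retractClosure {X : A} (hX : P.retractClosure X) :
    ∃ Z, P (X ⊞ Z) := by
  obtain ⟨Y, hY, ⟨r⟩⟩ := hX
  obtain ⟨Z, f, g, hT⟩ := distinguished_cocone_triangle r.i
  obtain ⟨e, -⟩ := exists_iso_binaryBiproduct_of_distTriang _ hT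
    (Triangle.mor₃_eq_zero_of_mono₁ _ hT (inferInstanceAs (Mono r.i)))
  exact ⟨Z, P.prop_of_iso e hY⟩

namespace SameComplements

variable {P}

lemma of_iso {M N : A} (e : M ≅ N) : P.SameComplements M N :=
  fun W => P.prop_iff_of_iso (biprod.mapIso e (Iso.refl W))

lemma biprod_right {M N : A} (h : P.SameComplements M N) (L : A) :
    P.SameComplements (M ⊞ L) (N ⊞ L) := fun W => by
  rw [P.prop_iff_of_iso (biprod.associator M L W), h,
    ← P.prop_iff_of_iso (biprod.associator N L W)]

lemma biprod {M N M' N' : A} (h : P.SameComplements M N) (h' : P.SameComplements M' N') :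
    P.SameComplements (M ⊞ M') (N ⊞ N') := fun W => by
  rw [h.biprod_right M' W, of_iso (P := P) (biprod.braiding N M') W, h'.biprod_right N W,
    of_iso (P := P) (biprod.braiding N' N) W]

end SameComplements

namespace ComplementClasses

noncomputable instance : Zero P.ComplementClasses := ⟨mk P 0⟩

noncomputable instance : Add P.ComplementClasses :=
  ⟨_root_.Quotient.map₂ (· ⊞ ·) fun _ _ h _ _ h' => SameComplements.biprod h h'⟩

lemma mk_biprod (M N : A) : mk P (M ⊞ N) = mk P M + mk P N := rfl

noncomputable instance : AddCommMonoid P.ComplementClasses where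
  nsmul := nsmulRec
  add_assoc a b c := by
    induction a using _root_.Quotient.ind
    induction b using _root_.Quotient.ind
    induction c using _root_.Quotient.ind
    exact mk_eq_mk (.of_iso (biprod.associator _ _ _))
  zero_add a := by
    induction a using _root_.Quotient.ind
    exact mk_eq_mk (.of_iso (isoZeroBiprod (isZero_zero A)).symm)
  add_zero a := by
    induction a using _root_.Quotient.ind
    exact mk_eq_mk (.of_iso (isoBiprodZero (isZero_zero A)).symm)
  add_comm a b := by
    induction a using _root_.Quotient.ind
    induction b using _root_.Quotient.ind
    exact mk_eq_mk (.of_iso (biprod.braiding _ _))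

end ComplementClasses

variable [P.IsTriangulated]

lemma prop_biprod_of_isTriangulated {X Y : A} (hX : P X) (hY : P Y) : P (X ⊞ Y) :=
  P.ext_of_isTriangulatedClosed₂ _ (binaryBiproductTriangle_distinguished X Y) hX hY

lemma prop_of_prop_biprod_left {X Y : A} (h : P (X ⊞ Y)) (hY : P Y) : P X :=
  P.ext_of_isTriangulatedClosed₁ _ (binaryBiproductTriangle_distinguished X Y) h hY

lemma prop_of_prop_biprod_right {X Y : A} (h : P (X ⊞ Y)) (hX : P X) : P Y :=
  P.ext_of_isTriangulatedClosed₃ _ (binaryBiproductTriangle_distinguished X Y) hX h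

lemma prop_biprod_obj₂_of_distTriang {T₁ T₂ : Triangle A} (hT₁ : T₁ ∈ distTriang A)
    (hT₂ : T₂ ∈ distTriang A) (h₁ : P (T₁.obj₁ ⊞ T₂.obj₁)) (h₃ : P (T₁.obj₃ ⊞ T₂.obj₃)) :
    P (T₁.obj₂ ⊞ T₂.obj₂) := by
  let T : Fin 2 → Triangle A := ![T₁, T₂]
  have hT : productTriangle T ∈ distTriang A :=
    productTriangle_distinguished T fun
      | 0 => hT₁
      | 1 => hT₂
  exact P.prop_of_iso (piFinTwoIsoBiprod _) (P.ext_of_isTriangulatedClosed₂ _ hT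
    (P.prop_of_iso (piFinTwoIsoBiprod _).symm h₁) (P.prop_of_iso (piFinTwoIsoBiprod _).symm h₃))

namespace SameComplements

variable {P}

lemma of_prop_biprod {M N W₀ : A} (hM : P (M ⊞ W₀)) (hN : P (N ⊞ W₀)) :
    P.SameComplements M N := by
  -- `(N ⊞ W₀) ⊞ (M ⊞ W) ≅ (N ⊞ W) ⊞ (M ⊞ W₀)`, and the summand `M ⊞ W₀` can be cancelled.
  have key : ∀ {M N : A}, P (M ⊞ W₀) → P (N ⊞ W₀) → ∀ W, P (M ⊞ W) → P (N ⊞ W) :=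
    fun hM hN W h => P.prop_of_prop_biprod_left
      (P.prop_of_iso (biprod.swapSnd _ _ _ _) (P.prop_biprod_of_isTriangulated hN h)) hM
  exact fun W => ⟨key hM hN W, key hN hM W⟩

lemma of_distTriang {T : Triangle A} (hT : T ∈ distTriang A) (h₁ : ∃ Y, P (T.obj₁ ⊞ Y))
    (h₃ : ∃ Y, P (T.obj₃ ⊞ Y)) : P.SameComplements T.obj₂ (T.obj₁ ⊞ T.obj₃) := by
  obtain ⟨Y₁, h₁⟩ := h₁
  obtain ⟨Y₃, h₃⟩ := h₃
  have hY := binaryBiproductTriangle_distinguished Y₁ Y₃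
  exact of_prop_biprod (P.prop_biprod_obj₂_of_distTriang hT hY h₁ h₃)
    (P.prop_biprod_obj₂_of_distTriang (binaryBiproductTriangle_distinguished _ _) hY h₁ h₃)

end SameComplements

variable {P} in
lemma sameComplements_zero_iff {M : A} : P.SameComplements M 0 ↔ P M := by
  have h0 : ∀ X : A, P ((0 : A) ⊞ X) ↔ P X := fun X =>
    P.prop_iff_of_iso (isoZeroBiprod (isZero_zero A)).symm
  refine ⟨fun h => ?_, fun hM W => ?_⟩
  · rw [P.prop_iff_of_iso (isoBiprodZero (isZero_zero A)), h, h0]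
    exact P.prop_zero
  · rw [h0]
    exact ⟨fun h => P.prop_of_prop_biprod_right h hM, P.prop_biprod_of_isTriangulated hM⟩

namespace ComplementClasses

variable {P}

lemma mk_eq_zero_iff {M : A} : mk P M = 0 ↔ P M :=
  _root_.Quotient.eq.trans sameComplements_zero_iff

lemma isAddUnit_mk {M N : A} (h : P (M ⊞ N)) : IsAddUnit (mk P M) :=
  IsAddUnit.of_add_eq_zero (mk P N) (by rwa [← mk_biprod, mk_eq_zero_iff])

/- `FreeAbelianGroup.lift` needs a group as target; by density every class is invertible, so we
lift into the units of `ComplementClasses`. -/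
noncomputable def addUnitMk (hP : ∀ X : A, P.retractClosure X) (M : A) :
    AddUnits P.ComplementClasses :=
  (isAddUnit_mk (P.exists_prop_biprod_of_retractClosure (hP M)).choose_spec).addUnit

lemma val_addUnitMk (hP : ∀ X : A, P.retractClosure X) (M : A) :
    (addUnitMk hP M : P.ComplementClasses) = mk P M :=
  IsAddUnit.addUnit_spec _

lemma eulerSubgroup_le_ker (hP : ∀ X : A, P.retractClosure X) :
    eulerSubgroup A ≤ (FreeAbelianGroup.lift (addUnitMk hP)).ker := by
  refine (AddSubgroup.closure_le _).2 ?_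
  rintro _ (⟨T, hT, rfl⟩ | ⟨U, V, ⟨e⟩, rfl⟩) <;>
    simp only [SetLike.mem_coe, AddMonoidHom.mem_ker, map_sub, map_add,
      FreeAbelianGroup.lift_apply_of, sub_sub, sub_eq_zero] <;>
    apply AddUnits.ext <;>
    simp only [AddUnits.val_add, val_addUnitMk, ← mk_biprod]
  · exact mk_eq_mk (.of_distTriang hT (P.exists_prop_biprod_of_retractClosure (hP _))
      (P.exists_prop_biprod_of_retractClosure (hP _)))
  · exact mk_eq_mk (.of_iso e)

noncomputable def gGroupHom (hP : ∀ X : A, P.retractClosure X) :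
    GGroup A →+ AddUnits P.ComplementClasses :=
  QuotientAddGroup.lift _ (FreeAbelianGroup.lift (addUnitMk hP)) (eulerSubgroup_le_ker hP)

lemma val_gGroupHom_gclass (hP : ∀ X : A, P.retractClosure X) (X : A) :
    (gGroupHom hP (gclass X) : P.ComplementClasses) = mk P X := by
  rw [gGroupHom, gclass, QuotientAddGroup.lift_mk, FreeAbelianGroup.lift_apply_of, val_addUnitMk]

end ComplementClasses

end ObjectProperty

end CategoryTheory

/-- Let `φ : C ⥤ D` be a fully faithful triangulated functor such that every object of
`D` is a direct summand of an object in the image of `φ`, and assume `D` satisfies weak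
cancellation. If the class `[V]` of `V : D` in the Grothendieck group lies in the image of
the induced map `G(φ)`, then `V ≅ φ W` for some `W : C`. -/
theorem essImage_of_class_in_image
    {C D : Type*} [Category C] [Preadditive C] [HasZeroObject C] [HasShift C ℤ]
    [∀ n : ℤ, (shiftFunctor C n).Additive] [Pretriangulated C]
    [Category D] [Preadditive D] [HasZeroObject D] [HasShift D ℤ]
    [∀ n : ℤ, (shiftFunctor D n).Additive] [Pretriangulated D]
    [HasBinaryBiproducts D]
    (φ : C ⥤ D) [φ.Additive] [φ.CommShift ℤ] [φ.IsTriangulated]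
    [φ.Full] [φ.Faithful]
    (hdense : ∀ Y : D, ∃ (X : C) (s : Y ⟶ φ.obj X) (r : φ.obj X ⟶ Y), s ≫ r = 𝟙 Y)
    (hwc : WeakCancellation D)
    (g : GGroup C →+ GGroup D)
    (hg : ∀ X : C, g (gclass X) = gclass (φ.obj X))
    (V : D) (hV : gclass V ∈ AddMonoidHom.range g) :
    ∃ W : C, Nonempty (φ.obj W ≅ V) := by
  have hP : ∀ Y : D, φ.essImage.retractClosure Y := fun Y =>
    let ⟨X, s, r, h⟩ := hdense Y
    ⟨φ.obj X, φ.obj_mem_essImage X, ⟨⟨s, r, h⟩⟩⟩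
  have hφ : (ObjectProperty.ComplementClasses.gGroupHom hP).comp g = 0 := by
    ext X
    change ((ObjectProperty.ComplementClasses.gGroupHom hP (g (gclass X)) : AddUnits _) :
      φ.essImage.ComplementClasses) = 0
    rw [hg, ObjectProperty.ComplementClasses.val_gGroupHom_gclass,
      ObjectProperty.ComplementClasses.mk_eq_zero_iff]
    exact φ.obj_mem_essImage X
  obtain ⟨x, hx⟩ := hV
  show φ.essImage V
  rw [← ObjectProperty.ComplementClasses.mk_eq_zero_iff (P := φ.essImage),
    ← ObjectProperty.ComplementClasses.val_gGroupHom_gclass hP, ← hx, ← AddMonoidHom.comp_apply,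
    hφ, AddMonoidHom.zero_apply, AddUnits.val_zero]
end

section
/- Let φ : C → D be a fully faithful triangulated functor such that every object of D is a direct summand of an object in the image of φ, and assume D satisfies weak cancellation. If the induced map G(φ) : G(C) → G(D) on Grothendieck groups is an isomorphism, then φ is an equivalence of categories. -/
open CategoryTheory Limits Pretriangulated

/-!
Let `M` be the commutative monoid of isomorphism classes of `D` under `⊞`, and `M ⧸ S` its
quotient by the classes of objects in the image of `φ`. Every object has a complement in the
image, so `M ⧸ S` is a group; and since the essential image of `φ` is closed under extensions,
adding complements to the outer terms of a distinguished triangle `A → B → C` shows that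
`[B] = [A] + [C]` in `M ⧸ S`. Hence `Y ↦ [Y]` induces a homomorphism `G(D) → M ⧸ S` vanishing
on the image of `G(φ)`, which is everything. So `Y ⊞ φ X' ≅ φ X` for some `X, X'`; splitting
`X'` off `X` inside `C` gives `φ X ≅ φ X' ⊞ φ Z`, and weak cancellation gives `Y ≅ φ Z`.
-/

open ZeroObject

namespace CategoryTheory

def IsoClass (E : Type*) [Category E] : Type _ := _root_.Quotient (isIsomorphicSetoid E)

namespace IsoClass

variable {E : Type*} [Category E]

def mk (X : E) : IsoClass E := _root_.Quotient.mk _ X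

lemma mk_eq_mk_iff {X Y : E} : mk X = mk Y ↔ Nonempty (X ≅ Y) := _root_.Quotient.eq

lemma mk_eq_mk_of_iso {X Y : E} (e : X ≅ Y) : mk X = mk Y := mk_eq_mk_iff.2 ⟨e⟩

lemma mk_surjective : Function.Surjective (mk : E → IsoClass E) := Quotient.mk_surjective

noncomputable instance [HasZeroObject E] : Zero (IsoClass E) := ⟨mk 0⟩

variable [HasZeroMorphisms E] [HasBinaryBiproducts E]

noncomputable instance : Add (IsoClass E) :=
  ⟨_root_.Quotient.lift₂ (fun X Y => mk (X ⊞ Y)) fun _ _ _ _ ⟨e₁⟩ ⟨e₂⟩ =>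
    mk_eq_mk_of_iso (biprod.mapIso e₁ e₂)⟩

lemma mk_biprod (X Y : E) : mk (X ⊞ Y) = mk X + mk Y := rfl

variable [HasZeroObject E]

noncomputable instance : AddCommMonoid (IsoClass E) where
  add_assoc a b c := _root_.Quotient.inductionOn₃ a b c fun X Y Z =>
    mk_eq_mk_of_iso (biprod.associator X Y Z)
  zero_add a := _root_.Quotient.inductionOn a fun X =>
    mk_eq_mk_of_iso (isoZeroBiprod (isZero_zero E)).symm
  add_zero a := _root_.Quotient.inductionOn a fun X =>
    mk_eq_mk_of_iso (isoBiprodZero (isZero_zero E)).symm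
  add_comm a b := _root_.Quotient.inductionOn₂ a b fun X Y =>
    mk_eq_mk_of_iso (biprod.braiding X Y)
  nsmul := nsmulRec

end IsoClass

end CategoryTheory

namespace AddSubmonoid

variable {M : Type*} [AddCommMonoid M] (S : AddSubmonoid M)

def quotientCon : AddCon M where
  r a b := ∃ s ∈ S, ∃ t ∈ S, a + s = b + t
  iseqv :=
    { refl a := ⟨0, S.zero_mem, 0, S.zero_mem, rfl⟩
      symm := fun ⟨s, hs, t, ht, h⟩ => ⟨t, ht, s, hs, h.symm⟩
      trans := fun {a b c} ⟨s, hs, t, ht, h⟩ ⟨s', hs', t', ht', h'⟩ =>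
        ⟨s + s', S.add_mem hs hs', t + t', S.add_mem ht ht', by
          calc a + (s + s') = b + t + s' := by rw [← h, add_assoc]
            _ = c + (t + t') := by rw [add_right_comm, h', add_right_comm, add_assoc]⟩ }
  add' := fun ⟨s, hs, t, ht, h⟩ ⟨s', hs', t', ht', h'⟩ =>
    ⟨s + s', S.add_mem hs hs', t + t', S.add_mem ht ht', by
      rw [add_add_add_comm, h, h', add_add_add_comm]⟩

lemma quotientCon_coe_eq_zero {a : M} (ha : a ∈ S) : (a : S.quotientCon.Quotient) = 0 :=
  (S.quotientCon.eq).2 ⟨0, S.zero_mem, a, ha, by rw [add_zero, zero_add]⟩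

noncomputable abbrev quotientConAddCommGroup (h : ∀ a, ∃ b, a + b ∈ S) :
    AddCommGroup S.quotientCon.Quotient :=
  have neg_add : ∀ q : S.quotientCon.Quotient, ∃ q', q' + q = 0 := fun q =>
    AddCon.induction_on q fun a =>
      let ⟨b, hb⟩ := h a
      ⟨b, by rw [← AddCon.coe_add, add_comm, S.quotientCon_coe_eq_zero hb]⟩
  letI : Neg S.quotientCon.Quotient := ⟨fun q => (neg_add q).choose⟩
  { (inferInstance : AddCommMonoid S.quotientCon.Quotient) with
    neg_add_cancel q := (neg_add q).choose_spec
    zsmul := zsmulRec }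

end AddSubmonoid

namespace GGroup

variable {C : Type*} [Category C] [Preadditive C] [HasZeroObject C] [HasShift C ℤ]
  [∀ n : ℤ, (shiftFunctor C n).Additive] [Pretriangulated C] {A : Type*} [AddCommGroup A]

def lift (f : C → A) (hiso : ∀ X Y : C, Nonempty (X ≅ Y) → f X = f Y)
    (htri : ∀ T ∈ distTriang C, f T.obj₂ = f T.obj₁ + f T.obj₃) : GGroup C →+ A :=
  QuotientAddGroup.lift _ (FreeAbelianGroup.lift f) <| (AddSubgroup.closure_le _).2 <| by
    rintro x (⟨T, hT, rfl⟩ | ⟨X, Y, e, rfl⟩)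
    · simp [htri T hT]
    · simp [hiso X Y e]

lemma lift_gclass (f : C → A) (hiso : ∀ X Y : C, Nonempty (X ≅ Y) → f X = f Y)
    (htri : ∀ T ∈ distTriang C, f T.obj₂ = f T.obj₁ + f T.obj₃) (X : C) :
    lift f hiso htri (gclass X) = f X :=
  FreeAbelianGroup.lift_apply_of f X

lemma hom_ext {f₁ f₂ : GGroup C →+ A} (h : ∀ X : C, f₁ (gclass X) = f₂ (gclass X)) :
    f₁ = f₂ :=
  QuotientAddGroup.addMonoidHom_ext _ (FreeAbelianGroup.lift_ext _ _ h)

end GGroup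

namespace CategoryTheory.Pretriangulated

variable {C : Type*} [Category C] [Preadditive C] [HasZeroObject C] [HasShift C ℤ]
  [∀ n : ℤ, (shiftFunctor C n).Additive] [Pretriangulated C]

lemma exists_iso_biprod_of_retract {X Y : C} (h : Retract X Y) :
    ∃ Z : C, Nonempty (Y ≅ X ⊞ Z) := by
  obtain ⟨Z, g, δ, hT⟩ := distinguished_cocone_triangle h.i
  have hδ : δ = 0 := by
    have : δ ≫ h.i⟦(1 : ℤ)⟧' = 0 := comp_distTriang_mor_zero₃₁ _ hT
    simpa [← Functor.map_comp] using this =≫ h.r⟦(1 : ℤ)⟧'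
  obtain ⟨e, -, -⟩ := exists_iso_binaryBiproduct_of_distTriang _ hT hδ
  exact ⟨Z, ⟨e⟩⟩

noncomputable def piBoolIsoBiprod (f : Bool → C) : ∏ᶜ f ≅ f true ⊞ f false where
  hom := biprod.lift (Pi.π f true) (Pi.π f false)
  inv := Pi.lift fun | true => biprod.fst | false => biprod.snd
  hom_inv_id := by
    apply limit.hom_ext
    rintro ⟨_ | _⟩ <;> simp
  inv_hom_id := by apply biprod.hom_ext <;> simp

lemma exists_distinguished_biprod (T₁ T₂ : Triangle C) (h₁ : T₁ ∈ distTriang C)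
    (h₂ : T₂ ∈ distTriang C) :
    ∃ T ∈ distTriang C, Nonempty (T.obj₁ ≅ T₁.obj₁ ⊞ T₂.obj₁) ∧
      Nonempty (T.obj₂ ≅ T₁.obj₂ ⊞ T₂.obj₂) ∧ Nonempty (T.obj₃ ≅ T₁.obj₃ ⊞ T₂.obj₃) := by
  let F : Bool → Triangle C := fun b => bif b then T₁ else T₂
  have hF : ∀ b, F b ∈ distTriang C := by rintro (_ | _); exacts [h₂, h₁]
  exact ⟨productTriangle F, productTriangle_distinguished F hF,
    ⟨piBoolIsoBiprod _⟩, ⟨piBoolIsoBiprod _⟩, ⟨piBoolIsoBiprod _⟩⟩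

end CategoryTheory.Pretriangulated

namespace CategoryTheory.ObjectProperty

open Pretriangulated

variable {C : Type*} [Category C] [Preadditive C] [HasZeroObject C] [HasShift C ℤ]
  [∀ n : ℤ, (shiftFunctor C n).Additive] [Pretriangulated C]
  (P : ObjectProperty C) [P.IsTriangulatedClosed₂] [P.IsClosedUnderIsomorphisms]

lemma biprod_ext_of_isTriangulatedClosed₂ (T : Triangle C) (hT : T ∈ distTriang C) {A B : C}
    (h₁ : P (T.obj₁ ⊞ A)) (h₃ : P (T.obj₃ ⊞ B)) : P (T.obj₂ ⊞ (A ⊞ B)) := by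
  obtain ⟨T', hT', ⟨e₁⟩, ⟨e₂⟩, ⟨e₃⟩⟩ :=
    exists_distinguished_biprod T (binaryBiproductTriangle A B) hT
      (binaryBiproductTriangle_distinguished A B)
  exact P.prop_of_iso e₂ (P.ext_of_isTriangulatedClosed₂ T' hT'
    (P.prop_of_iso e₁.symm h₁) (P.prop_of_iso e₃.symm h₃))

end CategoryTheory.ObjectProperty

namespace CategoryTheory.Functor

open Pretriangulated

variable {C D : Type*} [Category C] [Category D]

section Additive

variable [Preadditive C] [Preadditive D] [HasZeroObject C] [HasZeroObject D]
  [HasBinaryBiproducts C] [HasBinaryBiproducts D] (F : C ⥤ D) [F.Additive]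

def essImageSubmonoid : AddSubmonoid (IsoClass D) where
  carrier := {a | ∃ X : C, IsoClass.mk (F.obj X) = a}
  add_mem' := by
    rintro _ _ ⟨X, rfl⟩ ⟨Y, rfl⟩
    have := preservesBinaryBiproduct_of_preservesBiproduct F X Y
    exact ⟨X ⊞ Y, IsoClass.mk_eq_mk_of_iso (F.mapBiprod X Y)⟩
  zero_mem' := ⟨0, IsoClass.mk_eq_mk_of_iso F.mapZeroObject⟩

variable {F} in
lemma mk_mem_essImageSubmonoid {Y : D} (h : F.essImage Y) :
    IsoClass.mk Y ∈ F.essImageSubmonoid :=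
  ⟨h.witness, IsoClass.mk_eq_mk_of_iso h.getIso⟩

end Additive

lemma mem_essImage_of_biprod_iso [Preadditive C] [HasZeroObject C] [HasShift C ℤ]
    [∀ n : ℤ, (shiftFunctor C n).Additive] [Pretriangulated C] [Preadditive D]
    [HasBinaryBiproducts D] (F : C ⥤ D) [F.Additive] [F.Full] [F.Faithful]
    (hwc : WeakCancellation D) {Y : D} {X X' : C} (e : F.obj X' ⊞ Y ≅ F.obj X) :
    F.essImage Y := by
  let h : Retract X' X :=
    { i := F.preimage (biprod.inl ≫ e.hom)
      r := F.preimage (e.inv ≫ biprod.fst)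
      retract := F.map_injective (by simp) }
  obtain ⟨Z, ⟨e'⟩⟩ := exists_iso_biprod_of_retract h
  have := preservesBinaryBiproduct_of_preservesBiproduct F X' Z
  obtain ⟨e''⟩ := hwc (F.obj X') Y (F.obj Z) ⟨e ≪≫ F.mapIso e' ≪≫ F.mapBiprod X' Z⟩
  exact ⟨Z, ⟨e''.symm⟩⟩

lemma exists_biprod_mem_essImage [Preadditive D] [HasZeroObject D] [HasShift D ℤ]
    [∀ n : ℤ, (shiftFunctor D n).Additive] [Pretriangulated D] (F : C ⥤ D)
    (hdense : ∀ Y : D, ∃ (X : C) (s : Y ⟶ F.obj X) (r : F.obj X ⟶ Y), s ≫ r = 𝟙 Y) (Y : D) :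
    ∃ Z : D, F.essImage (Y ⊞ Z) := by
  obtain ⟨X, s, r, h⟩ := hdense Y
  obtain ⟨Z, ⟨e⟩⟩ := exists_iso_biprod_of_retract ⟨s, r, h⟩
  exact ⟨Z, ⟨X, ⟨e⟩⟩⟩

section Triangulated

variable [Preadditive C] [HasZeroObject C] [HasShift C ℤ]
  [∀ n : ℤ, (shiftFunctor C n).Additive] [Pretriangulated C]
  [Preadditive D] [HasZeroObject D] [HasShift D ℤ]
  [∀ n : ℤ, (shiftFunctor D n).Additive] [Pretriangulated D]
  (F : C ⥤ D) [F.Additive]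

lemma exists_add_mem_essImageSubmonoid
    (hdense : ∀ Y : D, ∃ (X : C) (s : Y ⟶ F.obj X) (r : F.obj X ⟶ Y), s ≫ r = 𝟙 Y)
    (a : IsoClass D) : ∃ b, a + b ∈ F.essImageSubmonoid := by
  obtain ⟨Y, rfl⟩ := IsoClass.mk_surjective a
  obtain ⟨Z, hZ⟩ := F.exists_biprod_mem_essImage hdense Y
  exact ⟨IsoClass.mk Z, mk_mem_essImageSubmonoid hZ⟩

lemma essImageSubmonoid_quotientCon_mk_obj₂ [F.CommShift ℤ] [F.IsTriangulated] [F.Full]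
    (hdense : ∀ Y : D, ∃ (X : C) (s : Y ⟶ F.obj X) (r : F.obj X ⟶ Y), s ≫ r = 𝟙 Y)
    (T : Triangle D) (hT : T ∈ distTriang D) :
    F.essImageSubmonoid.quotientCon (IsoClass.mk T.obj₂)
      (IsoClass.mk T.obj₁ + IsoClass.mk T.obj₃) := by
  obtain ⟨A, hA⟩ := F.exists_biprod_mem_essImage hdense T.obj₁
  obtain ⟨B, hB⟩ := F.exists_biprod_mem_essImage hdense T.obj₃
  have hAB := F.essImage.biprod_ext_of_isTriangulatedClosed₂ T hT hA hB
  let q : D → F.essImageSubmonoid.quotientCon.Quotient := fun Y => (IsoClass.mk Y : IsoClass D)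
  have hq : ∀ {Y}, F.essImage Y → q Y = 0 := fun hY =>
    F.essImageSubmonoid.quotientCon_coe_eq_zero (mk_mem_essImageSubmonoid hY)
  have h₁ : q T.obj₁ + q A = 0 := hq hA
  have h₃ : q T.obj₃ + q B = 0 := hq hB
  have h₂ : q T.obj₂ + (q A + q B) = 0 := hq hAB
  refine (AddCon.eq _).1 ?_
  calc q T.obj₂ = q T.obj₂ + (q T.obj₁ + q A) + (q T.obj₃ + q B) := by
        rw [h₁, h₃, add_zero, add_zero]
    _ = q T.obj₂ + (q A + q B) + q T.obj₁ + q T.obj₃ := by abel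
    _ = q T.obj₁ + q T.obj₃ := by rw [h₂, zero_add]

lemma mem_essImage_of_essImageSubmonoid_quotientCon_zero [F.Full] [F.Faithful]
    (hwc : WeakCancellation D) {Y : D} (h : F.essImageSubmonoid.quotientCon (IsoClass.mk Y) 0) :
    F.essImage Y := by
  obtain ⟨_, ⟨X', rfl⟩, _, ⟨X, rfl⟩, h⟩ := h
  rw [zero_add, ← IsoClass.mk_biprod] at h
  obtain ⟨e⟩ := IsoClass.mk_eq_mk_iff.1 h
  exact F.mem_essImage_of_biprod_iso hwc (biprod.braiding _ _ ≪≫ e)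

end Triangulated

end CategoryTheory.Functor

/-- Let `φ : C ⥤ D` be a fully faithful triangulated functor such that every object of
`D` is a direct summand of an object in the image of `φ`, and assume `D` satisfies weak
cancellation. If the induced map `G(φ)` on Grothendieck groups is an isomorphism, then
`φ` is an equivalence of categories. -/
theorem equivalence_of_grothendieck_iso
    {C D : Type*} [Category C] [Preadditive C] [HasZeroObject C] [HasShift C ℤ]
    [∀ n : ℤ, (shiftFunctor C n).Additive] [Pretriangulated C]
    [Category D] [Preadditive D] [HasZeroObject D] [HasShift D ℤ]
    [∀ n : ℤ, (shiftFunctor D n).Additive] [Pretriangulated D]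
    [HasBinaryBiproducts D]
    (φ : C ⥤ D) [φ.Additive] [φ.CommShift ℤ] [φ.IsTriangulated]
    [φ.Full] [φ.Faithful]
    (hdense : ∀ Y : D, ∃ (X : C) (s : Y ⟶ φ.obj X) (r : φ.obj X ⟶ Y), s ≫ r = 𝟙 Y)
    (hwc : WeakCancellation D)
    (g : GGroup C →+ GGroup D)
    (hg : ∀ X : C, g (gclass X) = gclass (φ.obj X))
    (hbij : Function.Bijective g) :
    φ.IsEquivalence := by
  let _ := φ.essImageSubmonoid.quotientConAddCommGroup (φ.exists_add_mem_essImageSubmonoid hdense)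
  let χ : GGroup D →+ φ.essImageSubmonoid.quotientCon.Quotient :=
    GGroup.lift (fun Y => (IsoClass.mk Y : IsoClass D))
      (fun _ _ e => congrArg _ (IsoClass.mk_eq_mk_iff.2 e))
      (fun T hT => (AddCon.eq _).2 (φ.essImageSubmonoid_quotientCon_mk_obj₂ hdense T hT))
  have hχ : ∀ Y : D, χ (gclass Y) = (IsoClass.mk Y : IsoClass D) := GGroup.lift_gclass _ _ _
  have hχg : χ.comp g = 0 := GGroup.hom_ext fun X => by
    rw [AddMonoidHom.comp_apply, hg, hχ, AddMonoidHom.zero_apply]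
    exact φ.essImageSubmonoid.quotientCon_coe_eq_zero
      (Functor.mk_mem_essImageSubmonoid (φ.obj_mem_essImage X))
  have : φ.EssSurj := ⟨fun Y => by
    obtain ⟨z, hz⟩ := hbij.2 (gclass Y)
    refine φ.mem_essImage_of_essImageSubmonoid_quotientCon_zero hwc ((AddCon.eq _).1 ?_)
    rw [← hχ, ← hz]
    exact DFunLike.congr_fun hχg z⟩
  exact {}
end

section
/- Let φ : C → D be a fully faithful triangulated functor such that every object of D is a direct summand of an object in the image of φ, and assume D satisfies weak cancellation. Then for every object Y of D there exists X ∈ C with φ(X) ≅ Y ⊕ Y[1]. -/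
/-!
Since `Y` is a retract of some `φ X`, we have `φ X ≅ Y ⊞ Z`. The direct sum of the distinguished
triangles `Y ⟶ Y ⟶ Y ⊞ Y⟦1⟧ ⟶ Y⟦1⟧` (on the zero map) and `Z ⟶ Z ⟶ 0 ⟶ Z⟦1⟧` (on the identity)
is distinguished, and its first two vertices are both isomorphic to `φ X`. As `φ` is full and
triangulated, the cone in `C` of a preimage of its first morphism `0 ⊞ 𝟙` (read on `φ X`) is sent
to its third vertex, which is `Y ⊞ Y⟦1⟧`.
-/

open CategoryTheory Limits Pretriangulated

namespace CategoryTheory.Pretriangulated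

variable {C : Type*} [Category C] [Preadditive C] [HasZeroObject C] [HasShift C ℤ]
  [∀ n : ℤ, (shiftFunctor C n).Additive] [Pretriangulated C]

instance (T₁ T₂ : Triangle C) : HasLimit (pair T₁ T₂) :=
  ⟨⟨⟨_, productTriangle.isLimitFan _⟩⟩⟩

instance : HasBinaryProducts (Triangle C) := hasBinaryProducts_of_hasLimit_pair _

instance : HasBinaryBiproducts (Triangle C) := HasBinaryBiproducts.of_hasBinaryProducts

instance : (Triangle.π₁ : Triangle C ⥤ C).Additive := {}

instance : (Triangle.π₂ : Triangle C ⥤ C).Additive := {}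

instance : (Triangle.π₃ : Triangle C ⥤ C).Additive := {}

lemma biprod_distinguished {T₁ T₂ : Triangle C} (h₁ : T₁ ∈ distTriang C)
    (h₂ : T₂ ∈ distTriang C) : (T₁ ⊞ T₂) ∈ distTriang C :=
  isomorphic_distinguished _ (productTriangle_distinguished _ (by rintro (_ | _) <;> assumption))
    _ (biprod.isoProd T₁ T₂ ≪≫ limit.isoLimitCone ⟨_, productTriangle.isLimitFan _⟩)

lemma exists_iso_obj₃_biprod_of_mor₁_eq_zero {T : Triangle C} (hT : T ∈ distTriang C)
    (h : T.mor₁ = 0) : Nonempty (T.obj₃ ≅ T.obj₂ ⊞ T.obj₁⟦(1 : ℤ)⟧) := by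
  obtain ⟨e, -, -⟩ := exists_iso_binaryBiproduct_of_distTriang _ (rot_of_distTriang _ hT)
    (by simp [h] : -T.mor₁⟦(1 : ℤ)⟧' = 0)
  exact ⟨e⟩

lemma exists_iso_biprod_of_isSplitMono {Y A : C} (s : Y ⟶ A) [IsSplitMono s] :
    ∃ Z : C, Nonempty (A ≅ Y ⊞ Z) := by
  obtain ⟨Z, p, w, hT⟩ := distinguished_cocone_triangle s
  obtain ⟨e, -, -⟩ := exists_iso_binaryBiproduct_of_distTriang _ hT
    (Triangle.mor₃_eq_zero_of_mono₁ _ hT (inferInstanceAs (Mono s)))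
  exact ⟨Z, ⟨e⟩⟩

end CategoryTheory.Pretriangulated

namespace CategoryTheory.Functor

variable {C D : Type*} [Category C] [Preadditive C] [HasZeroObject C] [HasShift C ℤ]
  [∀ n : ℤ, (shiftFunctor C n).Additive] [Pretriangulated C]
  [Category D] [Preadditive D] [HasZeroObject D] [HasShift D ℤ]
  [∀ n : ℤ, (shiftFunctor D n).Additive] [Pretriangulated D]
  (F : C ⥤ D) [F.CommShift ℤ] [F.IsTriangulated] [F.Full]

lemma exists_iso_obj₃_of_iso_obj₁_of_iso_obj₂ (T : Triangle D) (hT : T ∈ distTriang D)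
    {X₁ X₂ : C} (e₁ : F.obj X₁ ≅ T.obj₁) (e₂ : F.obj X₂ ≅ T.obj₂) :
    ∃ X₃ : C, Nonempty (F.obj X₃ ≅ T.obj₃) := by
  let f := F.preimage (e₁.hom ≫ T.mor₁ ≫ e₂.inv)
  have hf : Arrow.mk (F.map f) ≅ Arrow.mk T.mor₁ := Arrow.isoMk e₁ e₂ (by simp [f])
  obtain ⟨X₃, g, h, hT'⟩ := distinguished_cocone_triangle f
  obtain ⟨e, -, -⟩ := exists_iso_of_arrow_iso _ _ (F.map_distinguished _ hT') hT hf
  exact ⟨X₃, ⟨Triangle.π₃.mapIso e⟩⟩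

end CategoryTheory.Functor

-- Lets `Functor.mapBiprod` apply to the additive projections `Triangle.πᵢ`.
attribute [local instance] preservesBinaryBiproduct_of_preservesBiproduct

/-- Let `φ : C ⥤ D` be a fully faithful triangulated functor such that every object of
`D` is a direct summand of an object in the image of `φ`, and assume `D` satisfies weak
cancellation. Then for every `Y : D` there is `X : C` with `φ X ≅ Y ⊞ Y⟦1⟧`. -/
theorem exists_preimage_of_sum_with_shift
    {C D : Type*} [Category C] [Preadditive C] [HasZeroObject C] [HasShift C ℤ]
    [∀ n : ℤ, (shiftFunctor C n).Additive] [Pretriangulated C]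
    [Category D] [Preadditive D] [HasZeroObject D] [HasShift D ℤ]
    [∀ n : ℤ, (shiftFunctor D n).Additive] [Pretriangulated D]
    [HasBinaryBiproducts D]
    (φ : C ⥤ D) [φ.Additive] [φ.CommShift ℤ] [φ.IsTriangulated]
    [φ.Full] [φ.Faithful]
    (hdense : ∀ Y : D, ∃ (X : C) (s : Y ⟶ φ.obj X) (r : φ.obj X ⟶ Y), s ≫ r = 𝟙 Y)
    (hwc : WeakCancellation D)
    (Y : D) :
    ∃ X : C, Nonempty (φ.obj X ≅ Y ⊞ (Y⟦(1 : ℤ)⟧)) := by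
  obtain ⟨X, s, r, hsr⟩ := hdense Y
  have : IsSplitMono s := .mk' ⟨r, hsr⟩
  obtain ⟨Z, ⟨e⟩⟩ := exists_iso_biprod_of_isSplitMono s
  obtain ⟨Q, u, v, hQ⟩ := distinguished_cocone_triangle (0 : Y ⟶ Y)
  obtain ⟨eQ⟩ := exists_iso_obj₃_biprod_of_mor₁_eq_zero hQ rfl
  let T := Triangle.mk 0 u v ⊞ contractibleTriangle Z
  obtain ⟨X', ⟨e'⟩⟩ := φ.exists_iso_obj₃_of_iso_obj₁_of_iso_obj₂ T
    (biprod_distinguished hQ (contractible_distinguished Z))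
    (e ≪≫ (Triangle.π₁.mapBiprod (Triangle.mk 0 u v) (contractibleTriangle Z)).symm)
    (e ≪≫ (Triangle.π₂.mapBiprod (Triangle.mk 0 u v) (contractibleTriangle Z)).symm)
  exact ⟨X', ⟨e' ≪≫ Triangle.π₃.mapBiprod _ _ ≪≫ (isoBiprodZero (isZero_zero D)).symm ≪≫ eQ⟩⟩
end
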